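/- arXiv:2205.07126 — 2 statements merged into one kernel-verified Lean document; each statement's English description precedes it below -/
import Mathlib

section
/- Let G be a finite directed graph with a cost function c on edges, and let source s and destination d be vertices. Consider the iterative procedure: repeatedly find a shortest (fewest-edges) path p from s to d in the current graph, record its objective value f(p) = w1·len(p) + (max over edges e in p of c(e)), then delete from the graph every edge whose cost is ≥ the maximum edge cost along p, and repeat until no s–d path remains. Then the path with minimum recorded objective value among all recorded paths achieves the minimum of f over all s–d paths in the original graph G. -/
/-- `p` is a directed path from `s` to `d` using edges from `E`. -/
def IsPath {V : Type*} (E : Finset (V × V)) (s d : V) (p : List (V × V)) : Prop :=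
  p ≠ [] ∧ (∀ e ∈ p, e ∈ E) ∧ (∀ e, p.head? = some e → e.1 = s) ∧
    (∀ e, p.getLast? = some e → e.2 = d) ∧ List.Chain' (fun e f => e.2 = f.1) p

/-- Bottleneck (maximum) edge cost along a path. -/
noncomputable def bmax {V : Type*} (c : V × V → ℝ) (p : List (V × V)) : ℝ :=
  WithBot.unbotD 0 ((p.map c).maximum)

/-- Objective `f(p) = w1·len(p) + bottleneck(p)`. -/
noncomputable def fval {V : Type*} (w1 : ℝ) (c : V × V → ℝ) (p : List (V × V)) : ℝ :=
  w1 * p.length + bmax c p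

lemma le_bmax_of_mem {V : Type*} (c : V × V → ℝ) {p : List (V × V)} {e : V × V}
    (he : e ∈ p) : c e ≤ bmax c p := by
  have h := List.le_maximum_of_mem' (List.mem_map_of_mem (f := c) he)
  unfold bmax
  cases hm : (p.map c).maximum with
  | bot => rw [hm] at h; exact absurd h (by simp)
  | coe m => rw [hm] at h; simpa using h

lemma transition {V : Type*} {s d : V} (G : ℕ → Finset (V × V)) (q : List (V × V))
    (N : ℕ) (h0 : IsPath (G 0) s d q) (hN : ¬ IsPath (G N) s d q) :
    ∃ k < N, IsPath (G k) s d q ∧ ¬ IsPath (G (k+1)) s d q := by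
  induction N with
  | zero => exact absurd h0 hN
  | succ n ih =>
    by_cases h : IsPath (G n) s d q
    · exact ⟨n, Nat.lt_succ_self n, h, hN⟩
    · obtain ⟨k, hk, h1, h2⟩ := ih h
      exact ⟨k, hk.trans (Nat.lt_succ_self n), h1, h2⟩

/-- The iterative bottleneck-deletion procedure: the recorded path with minimum
objective value achieves the global minimum of `f` over all `s`–`d` paths in `G`. -/
theorem bottleneck_deletion_optimal {V : Type*} (E : Finset (V × V)) (s d : V)
    (c : V × V → ℝ) (w1 : ℝ) (hw1 : 0 ≤ w1)
    (G : ℕ → Finset (V × V)) (p : ℕ → List (V × V)) (N : ℕ)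
    (hG0 : G 0 = E)
    (hpath : ∀ k < N, IsPath (G k) s d (p k))
    (hshort : ∀ k < N, ∀ q, IsPath (G k) s d q → (p k).length ≤ q.length)
    (hdel : ∀ k < N, G (k + 1) = (G k).filter (fun e => c e < bmax c (p k)))
    (hstop : ¬ ∃ q, IsPath (G N) s d q)
    (hexists : ∃ q, IsPath E s d q) :
    ∃ k < N, (∀ j < N, fval w1 c (p k) ≤ fval w1 c (p j)) ∧
      ∀ q, IsPath E s d q → fval w1 c (p k) ≤ fval w1 c q := by
  have hN : 0 < N := by
    rcases Nat.eq_zero_or_pos N with h | h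
    · exact absurd (h ▸ hG0 ▸ hexists) hstop
    · exact h
  -- key: every path in E is dominated by some recorded path
  have key : ∀ q, IsPath E s d q → ∃ k < N, fval w1 c (p k) ≤ fval w1 c q := by
    intro q hq
    have h0 : IsPath (G 0) s d q := hG0 ▸ hq
    have hNq : ¬ IsPath (G N) s d q := fun h => hstop ⟨q, h⟩
    obtain ⟨k, hkN, h1, h2⟩ := transition G q N h0 hNq
    obtain ⟨hne, hmem, hh, hl, hc⟩ := h1
    -- some edge of q fails membership in G (k+1)
    have : ∃ e ∈ q, e ∉ G (k+1) := by
      by_contra hcon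
      push_neg at hcon
      exact h2 ⟨hne, hcon, hh, hl, hc⟩
    obtain ⟨e, heq, heG⟩ := this
    rw [hdel k hkN] at heG
    have hge : bmax c (p k) ≤ c e := by
      by_contra hlt
      exact heG (Finset.mem_filter.mpr ⟨hmem e heq, by push_neg at hlt; simpa using hlt⟩)
    have hb : bmax c (p k) ≤ bmax c q := hge.trans (le_bmax_of_mem c heq)
    have hlen : (p k).length ≤ q.length := hshort k hkN q ⟨hne, hmem, hh, hl, hc⟩
    unfold fval
    refine ⟨k, hkN, add_le_add ?_ hb⟩
    exact mul_le_mul_of_nonneg_left (by exact_mod_cast hlen) hw1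
  -- pick minimizer among k < N
  obtain ⟨k, hkmem, hkmin⟩ := (Finset.range N).exists_min_image (fun k => fval w1 c (p k))
    ⟨0, Finset.mem_range.mpr hN⟩
  refine ⟨k, Finset.mem_range.mp hkmem, fun j hj => hkmin j (Finset.mem_range.mpr hj), ?_⟩
  intro q hq
  obtain ⟨j, hjN, hle⟩ := key q hq
  exact (hkmin j (Finset.mem_range.mpr hjN)).trans hle
end

section
/- Let p be an s–d path returned at some iteration of the bottleneck-deletion algorithm (shortest path in the current subgraph G_k), and let q be any s–d path in the original graph G all of whose edges have combined cost ς strictly less than the bottleneck ς-cost of every previously found path. Then q is still present in G_k and therefore len(p) ≤ len(q); i.e., at each iteration the algorithm's current path is a shortest path among all original paths surviving all previous deletions. -/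
/-- At iteration `k` of the bottleneck-deletion algorithm, any original `s`–`d`
path all of whose edges have combined cost strictly below the bottleneck cost of
every previously found path still survives in `G k`, so the current path is a
shortest path among all surviving original paths. -/
theorem current_path_shortest_among_survivors {V : Type*} (E : Finset (V × V))
    (s d : V) (ς : V × V → ℝ)
    (G : ℕ → Finset (V × V)) (p : ℕ → List (V × V)) (k : ℕ)
    (hG0 : G 0 = E)
    (hpath : ∀ j < k, IsPath (G j) s d (p j))
    (hdel : ∀ j < k, G (j + 1) = (G j).filter (fun e => ς e < bmax ς (p j)))
    (hpk : IsPath (G k) s d (p k))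
    (hshort : ∀ r, IsPath (G k) s d r → (p k).length ≤ r.length)
    (q : List (V × V)) (hq : IsPath E s d q)
    (hqcost : ∀ e ∈ q, ∀ j < k, ς e < bmax ς (p j)) :
    IsPath (G k) s d q ∧ (p k).length ≤ q.length := by
  have hmem : ∀ j ≤ k, ∀ e ∈ q, e ∈ G j := by
    intro j hj
    induction j with
    | zero => intro e he; rw [hG0]; exact hq.2.1 e he
    | succ n ih =>
      intro e he
      rw [hdel n hj]
      exact Finset.mem_filter.2 ⟨ih (Nat.le_of_succ_le hj) e he,
        hqcost e he n hj⟩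
  have hqk : IsPath (G k) s d q :=
    ⟨hq.1, hmem k le_rfl, hq.2.2.1, hq.2.2.2.1, hq.2.2.2.2⟩
  exact ⟨hqk, hshort q hqk⟩
end
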